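/- Let M, N ∈ ⋀X be nonzero. Let ⌈M⌉ = max{p : ⟨M⟩_p ≠ 0} and ⌊M⌋ = min{p : ⟨M⟩_p ≠ 0} denote the top and bottom grades, set t = min{⌈M⌉, ⌈N⌉} and b = max{⌊M⌋, ⌊N⌋}. If dim(isp M + isp N) ≥ t + 2, then isp(M+N) = isp M ∩ isp N, and moreover dim isp(M+N) ≤ b − 2. -/

import Mathlib

/-!
If `v ∧ (M + N) = 0`, then `P := v ∧ M = -(v ∧ N)` is annihilated by every vector of
`isp M + isp N`. A multivector annihilated by `k` independent vectors is divisible by their blade,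
so if `P ≠ 0` its grades are at least `k = dim (isp M + isp N) ≥ t + 2`; but the grades of `P`
are at most `t + 1`. Hence `P = 0`, i.e. `v ∈ isp M ∩ isp N`. The bound follows from
`dim isp M ≤ ⌊M⌋`, `dim isp N ≤ ⌊N⌋` and
`dim (isp M ∩ isp N) = dim isp M + dim isp N - dim (isp M + isp N)`.
-/

open scoped RealInnerProductSpace

/-- The blade `v₁ ∧ ⋯ ∧ v_k` in the exterior algebra. -/
noncomputable def expBlade {X : Type*} [AddCommGroup X] [Module ℝ X] {k : ℕ}
    (v : Fin k → X) : ExteriorAlgebra ℝ X :=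
  (List.ofFn fun i => ExteriorAlgebra.ι ℝ (v i)).prod

/-- The inner space of a multivector `M`: the subspace `{v ∈ X : v ∧ M = 0}`. -/
noncomputable def innerSpace {X : Type*} [AddCommGroup X] [Module ℝ X]
    (M : ExteriorAlgebra ℝ X) : Submodule ℝ X :=
  LinearMap.ker ((LinearMap.mulRight ℝ M).comp (ExteriorAlgebra.ι ℝ))

/-- The outer space of a multivector `M`: the intersection of all subspaces `V ⊆ X` such
that `M` lies in the subalgebra of the exterior algebra generated by `V`. -/
noncomputable def outerSpace {X : Type*} [AddCommGroup X] [Module ℝ X]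
    (M : ExteriorAlgebra ℝ X) : Submodule ℝ X :=
  sInf {V : Submodule ℝ X |
    M ∈ Algebra.adjoin ℝ (⇑(ExteriorAlgebra.ι ℝ (M := X)) '' (V : Set X))}

/-- The degree-`i` homogeneous component of a multivector. -/
noncomputable def gradeProj {X : Type*} [AddCommGroup X] [Module ℝ X] (i : ℕ) :
    ExteriorAlgebra ℝ X →ₗ[ℝ] ExteriorAlgebra ℝ X :=
  GradedAlgebra.proj (fun i : ℕ => ⋀[ℝ]^i X) i

/-- The top grade of a nonzero multivector. -/
noncomputable def topGrade {X : Type*} [AddCommGroup X] [Module ℝ X]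
    (M : ExteriorAlgebra ℝ X) : ℕ :=
  sSup {i : ℕ | gradeProj i M ≠ 0}

/-- The bottom grade of a nonzero multivector. -/
noncomputable def botGrade {X : Type*} [AddCommGroup X] [Module ℝ X]
    (M : ExteriorAlgebra ℝ X) : ℕ :=
  sInf {i : ℕ | gradeProj i M ≠ 0}

theorem LinearIndependent.exists_dual_apply_eq_ite {K V ι : Type*} [Field K] [AddCommGroup V]
    [Module K V] [DecidableEq ι] {v : ι → V} (hv : LinearIndependent K v) (i : ι) :
    ∃ f : Module.Dual K V, ∀ j, f (v j) = if j = i then 1 else 0 := by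
  obtain ⟨f, hf⟩ := LinearMap.exists_extend ((Module.Basis.span hv).coord i)
  refine ⟨f, fun j => ?_⟩
  have h := congr($hf (Module.Basis.span hv j))
  simpa [Module.Basis.span_apply, Finsupp.single_apply, eq_comm] using h

namespace ExteriorAlgebra

variable {K V : Type*} [Field K] [AddCommGroup V] [Module K V]

theorem exists_eq_ιMulti_mul_of_forall_ι_mul_eq_zero {k : ℕ} {v : Fin k → V}
    (hv : LinearIndependent K v) {P : ExteriorAlgebra K V} (hP : ∀ i, ι K (v i) * P = 0) :
    ∃ Q, P = ιMulti K k v * Q := by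
  induction k generalizing P with
  | zero => exact ⟨P, by simp⟩
  | succ n ih =>
    obtain ⟨f, hf⟩ := hv.exists_dual_apply_eq_ite 0
    -- `f ⌋ (v i ∧ P) = f (v i) • P - v i ∧ (f ⌋ P)`, and the left side vanishes.
    have hsplit : ∀ i, f (v i) • P = ι K (v i) * CliffordAlgebra.contractLeft f P := fun i => by
      have h := CliffordAlgebra.contractLeft_ι_mul (Q := 0) f (v i) P
      rwa [hP i, map_zero, eq_comm, sub_eq_zero] at h
    obtain ⟨Q, hQ⟩ := ih (hv.comp Fin.succ (Fin.succ_injective n)) fun i => by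
      simpa [hf, Fin.succ_ne_zero] using (hsplit i.succ).symm
    refine ⟨Q, ?_⟩
    rw [ιMulti_succ_apply, mul_assoc]
    change P = ι K (v 0) * (ιMulti K n (v ∘ Fin.succ) * Q)
    rw [← hQ]
    simpa [hf] using hsplit 0

theorem ι_mem_exteriorPower_one (x : V) : ι K x ∈ ⋀[K]^1 V :=
  ιMulti_range K 1 ⟨![x], by simp⟩

end ExteriorAlgebra

open ExteriorAlgebra

section

variable {X : Type*} [AddCommGroup X] [Module ℝ X]

theorem gradeProj_apply (i : ℕ) (M : ExteriorAlgebra ℝ X) :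
    gradeProj i M = (DirectSum.decompose (fun i : ℕ => ⋀[ℝ]^i X) M i : ExteriorAlgebra ℝ X) :=
  GradedAlgebra.proj_apply _ _ _

theorem gradeProj_eq_zero_of_mem_ne {i j : ℕ} {x : ExteriorAlgebra ℝ X} (hx : x ∈ ⋀[ℝ]^i X)
    (h : i ≠ j) : gradeProj j x = 0 := by
  rw [gradeProj_apply, DirectSum.decompose_of_mem_ne (fun i : ℕ => ⋀[ℝ]^i X) hx h]

theorem eq_zero_of_forall_gradeProj_eq_zero {M : ExteriorAlgebra ℝ X}
    (h : ∀ i, gradeProj i M = 0) : M = 0 := by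
  classical
  rw [← DirectSum.sum_support_decompose (fun i : ℕ => ⋀[ℝ]^i X) M]
  exact Finset.sum_eq_zero fun i _ => by rw [← gradeProj_apply, h i]

theorem gradeProj_mul_eq_zero_of_lt {k q : ℕ} {a : ExteriorAlgebra ℝ X} (ha : a ∈ ⋀[ℝ]^k X)
    (x : ExteriorAlgebra ℝ X) (h : q < k) : gradeProj q (a * x) = 0 := by
  induction x using DirectSum.Decomposition.inductionOn (fun i : ℕ => ⋀[ℝ]^i X) with
  | zero => simp
  | homogeneous m => exact gradeProj_eq_zero_of_mem_ne (SetLike.mul_mem_graded ha m.2) (by omega)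
  | add m m' hm hm' => rw [mul_add, map_add, hm, hm', add_zero]

theorem nonempty_setOf_gradeProj_ne_zero {M : ExteriorAlgebra ℝ X} (hM : M ≠ 0) :
    {i : ℕ | gradeProj i M ≠ 0}.Nonempty := by
  by_contra h
  exact hM (eq_zero_of_forall_gradeProj_eq_zero fun i => not_not.mp fun hi => h ⟨i, hi⟩)

theorem bddAbove_setOf_gradeProj_ne_zero (M : ExteriorAlgebra ℝ X) :
    BddAbove {i : ℕ | gradeProj i M ≠ 0} := by
  classical
  refine (DirectSum.decompose (fun i : ℕ => ⋀[ℝ]^i X) M).support.finite_toSet.bddAbove.mono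
    fun i hi => ?_
  simpa [gradeProj_apply] using hi

theorem gradeProj_topGrade_ne_zero {M : ExteriorAlgebra ℝ X} (hM : M ≠ 0) :
    gradeProj (topGrade M) M ≠ 0 :=
  Nat.sSup_mem (nonempty_setOf_gradeProj_ne_zero hM) (bddAbove_setOf_gradeProj_ne_zero M)

theorem gradeProj_botGrade_ne_zero {M : ExteriorAlgebra ℝ X} (hM : M ≠ 0) :
    gradeProj (botGrade M) M ≠ 0 :=
  Nat.sInf_mem (nonempty_setOf_gradeProj_ne_zero hM)

theorem botGrade_le_topGrade {M : ExteriorAlgebra ℝ X} (hM : M ≠ 0) : botGrade M ≤ topGrade M :=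
  Nat.sInf_le (gradeProj_topGrade_ne_zero hM)

theorem gradeProj_eq_zero_of_topGrade_lt {M : ExteriorAlgebra ℝ X} {j : ℕ} (h : topGrade M < j) :
    gradeProj j M = 0 :=
  not_not.mp fun hj => (le_csSup (bddAbove_setOf_gradeProj_ne_zero M) hj).not_gt h

theorem topGrade_le_of_forall_lt {M : ExteriorAlgebra ℝ X} {n : ℕ}
    (h : ∀ j, n < j → gradeProj j M = 0) : topGrade M ≤ n :=
  csSup_le' fun j hj => not_lt.mp fun hnj => hj (h j hnj)

theorem topGrade_neg (M : ExteriorAlgebra ℝ X) : topGrade (-M) = topGrade M := by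
  simp [topGrade]

theorem topGrade_mul_le {k : ℕ} {a : ExteriorAlgebra ℝ X} (ha : a ∈ ⋀[ℝ]^k X)
    (x : ExteriorAlgebra ℝ X) : topGrade (a * x) ≤ topGrade x + k := by
  classical
  refine topGrade_le_of_forall_lt fun q hq => ?_
  rw [← DirectSum.sum_support_decompose (fun i : ℕ => ⋀[ℝ]^i X) x, Finset.mul_sum, map_sum]
  refine Finset.sum_eq_zero fun j _ => ?_
  rcases eq_or_ne (k + j) q with rfl | hne
  · have hj := gradeProj_eq_zero_of_topGrade_lt (M := x) (j := j) (by omega)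
    rw [gradeProj_apply] at hj
    rw [hj, mul_zero, map_zero]
  · exact gradeProj_eq_zero_of_mem_ne (SetLike.mul_mem_graded ha (SetLike.coe_mem _)) hne

theorem mem_innerSpace_iff {M : ExteriorAlgebra ℝ X} {x : X} :
    x ∈ innerSpace M ↔ ι ℝ x * M = 0 :=
  Iff.rfl

theorem innerSpace_neg (M : ExteriorAlgebra ℝ X) : innerSpace (-M) = innerSpace M := by
  ext x
  simp [mem_innerSpace_iff]

theorem innerSpace_le_innerSpace_ι_mul (v : X) (M : ExteriorAlgebra ℝ X) :
    innerSpace M ≤ innerSpace (ι ℝ v * M) := fun w hw => by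
  rw [mem_innerSpace_iff] at hw ⊢
  rw [← mul_assoc, eq_neg_of_add_eq_zero_left (ι_add_mul_swap w v), neg_mul, mul_assoc, hw,
    mul_zero, neg_zero]

theorem innerSpace_inf_le_innerSpace_add (M N : ExteriorAlgebra ℝ X) :
    innerSpace M ⊓ innerSpace N ≤ innerSpace (M + N) := fun v ⟨hM, hN⟩ => by
  rw [SetLike.mem_coe, mem_innerSpace_iff] at hM hN
  rw [mem_innerSpace_iff, mul_add, hM, hN, add_zero]

theorem finrank_le_botGrade_of_le_innerSpace {P : ExteriorAlgebra ℝ X} (hP : P ≠ 0)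
    {W : Submodule ℝ X} (hW : W ≤ innerSpace P) : Module.finrank ℝ W ≤ botGrade P := by
  by_cases hfin : FiniteDimensional ℝ W
  · let u := Module.finBasis ℝ W
    obtain ⟨Q, rfl⟩ := exists_eq_ιMulti_mul_of_forall_ι_mul_eq_zero
      (u.linearIndependent.map' W.subtype W.ker_subtype) fun i => hW (u i).2
    exact not_lt.mp fun h => gradeProj_botGrade_ne_zero hP
      (gradeProj_mul_eq_zero_of_lt (ιMulti_range ℝ _ ⟨_, rfl⟩) Q h)
  · simp [Module.finrank_of_not_finite hfin]

theorem innerSpace_add_eq_inf {M N : ExteriorAlgebra ℝ X}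
    (h : min (topGrade M) (topGrade N) + 2 ≤ Module.finrank ℝ ↥(innerSpace M ⊔ innerSpace N)) :
    innerSpace (M + N) = innerSpace M ⊓ innerSpace N := by
  refine le_antisymm (fun v hv => ?_) (innerSpace_inf_le_innerSpace_add M N)
  rw [mem_innerSpace_iff, mul_add, add_eq_zero_iff_eq_neg] at hv
  suffices hP : ι ℝ v * M = 0 by
    rw [hP, zero_eq_neg] at hv
    exact ⟨hP, hv⟩
  by_contra hP
  have hW : innerSpace M ⊔ innerSpace N ≤ innerSpace (ι ℝ v * M) := by
    refine sup_le (innerSpace_le_innerSpace_ι_mul v M) ?_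
    rw [hv, innerSpace_neg]
    exact innerSpace_le_innerSpace_ι_mul v N
  have hM := topGrade_mul_le (ι_mem_exteriorPower_one v) M
  have hN := topGrade_mul_le (ι_mem_exteriorPower_one v) N
  rw [← topGrade_neg, ← hv] at hN
  have := (finrank_le_botGrade_of_le_innerSpace hP hW).trans (botGrade_le_topGrade hP)
  omega

end

theorem stmt16_general {X : Type*} [NormedAddCommGroup X] [InnerProductSpace ℝ X]
    (M N : ExteriorAlgebra ℝ X) (hM : M ≠ 0) (hN : N ≠ 0)
    (t b : ℕ) (ht : t = min (topGrade M) (topGrade N))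
    (hb : b = max (botGrade M) (botGrade N))
    (hdim : t + 2 ≤ Module.finrank ℝ ↥(innerSpace M ⊔ innerSpace N)) :
    innerSpace (M + N) = innerSpace M ⊓ innerSpace N ∧
    (Module.finrank ℝ ↥(innerSpace (M + N)) : ℤ) ≤ (b : ℤ) - 2 := by
  have hsum := innerSpace_add_eq_inf (ht ▸ hdim)
  refine ⟨hsum, ?_⟩
  have : FiniteDimensional ℝ ↥(innerSpace M ⊔ innerSpace N) :=
    Module.finite_of_finrank_pos (by omega)
  have : FiniteDimensional ℝ ↥(innerSpace M) :=
    Submodule.finiteDimensional_of_le (le_sup_left (b := innerSpace N))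
  have : FiniteDimensional ℝ ↥(innerSpace N) :=
    Submodule.finiteDimensional_of_le (le_sup_right (a := innerSpace M))
  have hdimsum := Submodule.finrank_sup_add_finrank_inf_eq (innerSpace M) (innerSpace N)
  have hdimM := finrank_le_botGrade_of_le_innerSpace hM le_rfl
  have hdimN := finrank_le_botGrade_of_le_innerSpace hN le_rfl
  have hgrM := botGrade_le_topGrade hM
  have hgrN := botGrade_le_topGrade hN
  rw [hsum]
  omega

/-- if `dim(isp M + isp N) ≥ min(⌈M⌉,⌈N⌉) + 2` then
`isp(M+N) = isp M ∩ isp N` and `dim isp(M+N) ≤ max(⌊M⌋,⌊N⌋) − 2`. -/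
theorem stmt16 {X : Type*} [NormedAddCommGroup X] [InnerProductSpace ℝ X]
    [FiniteDimensional ℝ X]
    (M N : ExteriorAlgebra ℝ X) (hM : M ≠ 0) (hN : N ≠ 0)
    (t b : ℕ) (ht : t = min (topGrade M) (topGrade N))
    (hb : b = max (botGrade M) (botGrade N))
    (hdim : t + 2 ≤ Module.finrank ℝ ↥(innerSpace M ⊔ innerSpace N)) :
    innerSpace (M + N) = innerSpace M ⊓ innerSpace N ∧
    (Module.finrank ℝ ↥(innerSpace (M + N)) : ℤ) ≤ (b : ℤ) - 2 :=
  stmt16_general M N hM hN t b ht hb hdim
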